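/- Let f : X → Y be a perfect irreducible continuous surjection. If Y is quasi κ-metrizable, then X is quasi κ-metrizable, via d(x,C) := ρ(f(x), f(C)) for regularly closed C ⊆ X, where ρ is a quasi κ-metric on Y. -/

import Mathlib

def RegClosed {X : Type*} [TopologicalSpace X] (C : Set X) : Prop :=
  C = closure (interior C)

def RegOpen {X : Type*} [TopologicalSpace X] (U : Set X) : Prop :=
  U = interior (closure U)

structure IsQuasiKappaMetric {X : Type*} [TopologicalSpace X] (ρ : X → Set X → ℝ) : Prop where
  nonneg : ∀ x C, RegClosed C → 0 ≤ ρ x C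
  k1star : ∀ C : Set X, RegClosed C → ∃ V : Set X, IsOpen V ∧ V ⊆ Cᶜ ∧
    Cᶜ ⊆ closure V ∧ ∀ x, 0 < ρ x C ↔ x ∈ V
  k2 : ∀ x (C C' : Set X), RegClosed C → RegClosed C' → C ⊆ C' → ρ x C' ≤ ρ x C
  k3 : ∀ C : Set X, RegClosed C → Continuous (fun x => ρ x C)
  k4 : ∀ S : Set (Set X), S.Nonempty → (∀ C ∈ S, RegClosed C) → IsChain (· ⊆ ·) S →
    ∀ x, ρ x (closure (⋃₀ S)) = sInf {r : ℝ | ∃ C ∈ S, r = ρ x C}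

/-!
For a closed irreducible surjection `f`, the small image `U♯ = kernImage f U` of a nonempty open
set is nonempty, open and contained in `f '' U`. So if `U♯ ⊆ closure W` then `U ⊆ closure (f ⁻¹' W)`;
with `W = U♯` this gives `f '' closure U = closure U♯`, hence `f` maps regularly closed sets to
regularly closed sets and commutes with closures of unions. The axioms of `ρ` then transfer to
`ρ (f x) (f '' C)`; for K1* apply the density statement to `U = Cᶜ`, whose small image is
`(f '' C)ᶜ`.
-/

open Set

lemma Function.Surjective.kernImage_subset_image {α β : Type*} {f : α → β}
    (hf : Function.Surjective f) (s : Set α) : kernImage f s ⊆ f '' s := by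
  intro y hy
  obtain ⟨x, rfl⟩ := hf y
  exact ⟨x, hy rfl, rfl⟩

lemma kernImage_nonempty_of_irreducible {X Y : Type*} [TopologicalSpace X] {f : X → Y}
    (hirr : ∀ F : Set X, IsClosed F → f '' F = univ → F = univ)
    {U : Set X} (hU : IsOpen U) (hne : U.Nonempty) : (kernImage f U).Nonempty := by
  rw [kernImage_eq_compl, nonempty_compl]
  intro h
  exact hne.ne_empty (compl_univ_iff.mp (hirr _ hU.isClosed_compl h))

lemma regClosed_closure_of_isOpen {X : Type*} [TopologicalSpace X] {V : Set X} (hV : IsOpen V) :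
    RegClosed (closure V) :=
  (closure_mono hV.subset_interior_closure).antisymm isClosed_closure.closure_interior_subset

section IrreducibleClosedMap

variable {X Y : Type*} [TopologicalSpace X] [TopologicalSpace Y] {f : X → Y}

lemma subset_closure_preimage_of_kernImage_subset_closure (hclosed : IsClosedMap f)
    (hsurj : Function.Surjective f)
    (hirr : ∀ F : Set X, IsClosed F → f '' F = univ → F = univ)
    {U : Set X} (hU : IsOpen U) {W : Set Y} (hW : kernImage f U ⊆ closure W) :
    U ⊆ closure (f ⁻¹' W) := by
  intro x hx
  refine mem_closure_iff.mpr fun O hO hxO => ?_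
  have hOU : IsOpen (O ∩ U) := hO.inter hU
  obtain ⟨y, hy⟩ := kernImage_nonempty_of_irreducible hirr hOU ⟨x, hxO, hx⟩
  obtain ⟨y', hy'O, hy'W⟩ := mem_closure_iff.mp (hW (kernImage_mono inter_subset_right hy)) _
    (isClosedMap_iff_kernImage.mp hclosed hOU) hy
  obtain ⟨x', hx', rfl⟩ := hsurj.kernImage_subset_image _ hy'O
  exact ⟨x', hx'.1, hy'W⟩

lemma image_closure_eq_closure_kernImage (hcont : Continuous f) (hclosed : IsClosedMap f)
    (hsurj : Function.Surjective f)
    (hirr : ∀ F : Set X, IsClosed F → f '' F = univ → F = univ)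
    {U : Set X} (hU : IsOpen U) :
    f '' closure U = closure (kernImage f U) := by
  refine subset_antisymm ?_ ?_
  · calc f '' closure U ⊆ f '' closure (f ⁻¹' kernImage f U) :=
          image_mono (closure_minimal
            (subset_closure_preimage_of_kernImage_subset_closure hclosed hsurj hirr hU
              subset_closure) isClosed_closure)
      _ ⊆ closure (f '' (f ⁻¹' kernImage f U)) := image_closure_subset_closure_image hcont
      _ ⊆ closure (kernImage f U) := closure_mono (image_preimage_subset _ _)
  · exact closure_minimal ((hsurj.kernImage_subset_image U).trans (image_mono subset_closure))
      (hclosed _ isClosed_closure)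

lemma RegClosed.image (hcont : Continuous f) (hclosed : IsClosedMap f)
    (hsurj : Function.Surjective f)
    (hirr : ∀ F : Set X, IsClosed F → f '' F = univ → F = univ)
    {C : Set X} (hC : RegClosed C) : RegClosed (f '' C) := by
  rw [hC, image_closure_eq_closure_kernImage hcont hclosed hsurj hirr isOpen_interior]
  exact regClosed_closure_of_isOpen (isClosedMap_iff_kernImage.mp hclosed isOpen_interior)

end IrreducibleClosedMap

theorem stmt15_general {X Y : Type*} [TopologicalSpace X] [TopologicalSpace Y]
    (f : X → Y) (hcont : Continuous f) (hclosed : IsClosedMap f)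
    (hsurj : Function.Surjective f)
    (hirr : ∀ F : Set X, IsClosed F → f '' F = Set.univ → F = Set.univ)
    (ρ : Y → Set Y → ℝ) (hρ : IsQuasiKappaMetric ρ) :
    IsQuasiKappaMetric (fun (x : X) (C : Set X) => ρ (f x) (f '' C)) := by
  have himg {C : Set X} (hC : RegClosed C) : RegClosed (f '' C) :=
    hC.image hcont hclosed hsurj hirr
  refine ⟨fun x C hC => hρ.nonneg _ _ (himg hC), fun C hC => ?_,
    fun x C C' hC hC' hCC' => hρ.k2 _ _ _ (himg hC) (himg hC') (image_mono hCC'),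
    fun C hC => (hρ.k3 _ (himg hC)).comp hcont, fun S hSne hSreg hSchain x => ?_⟩
  · obtain ⟨W, hWopen, hWC, hWdense, hWpos⟩ := hρ.k1star _ (himg hC)
    have hCopen : IsOpen Cᶜ := (hC ▸ isClosed_closure : IsClosed C).isOpen_compl
    refine ⟨f ⁻¹' W, hWopen.preimage hcont, fun x hxW hxC => hWC hxW (mem_image_of_mem f hxC),
      subset_closure_preimage_of_kernImage_subset_closure hclosed hsurj hirr hCopen ?_,
      fun x => hWpos (f x)⟩
    rwa [kernImage_compl]
  · have hk4 := hρ.k4 (image f '' S) (hSne.image _)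
      (forall_mem_image.mpr fun C hC => himg (hSreg C hC))
      (hSchain.image_of_map_rel _ _ (image f) fun _ _ => image_mono) (f x)
    rw [← image_sUnion, hclosed.closure_image_eq_of_continuous hcont] at hk4
    simpa only [exists_mem_image] using hk4

theorem stmt15 {X Y : Type*} [TopologicalSpace X] [TopologicalSpace Y]
    (f : X → Y) (hcont : Continuous f) (hclosed : IsClosedMap f)
    (hfib : ∀ y : Y, IsCompact (f ⁻¹' {y})) (hsurj : Function.Surjective f)
    (hirr : ∀ F : Set X, IsClosed F → f '' F = Set.univ → F = Set.univ)
    (ρ : Y → Set Y → ℝ) (hρ : IsQuasiKappaMetric ρ) :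
    IsQuasiKappaMetric (fun (x : X) (C : Set X) => ρ (f x) (f '' C)) :=
  stmt15_general f hcont hclosed hsurj hirr ρ hρ
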